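/- Let r, n ∈ ℕ with r ≤ n/100. Any properly edge-coloured n-vertex graph G with minimum degree at least r contains n/100 pairwise edge-disjoint rainbow matchings each with r edges. -/

import Mathlib

open scoped Classical

/-- A colouring of edges is proper if edges sharing a vertex get distinct colours. -/
def ProperColoring {V : Type*} (G : SimpleGraph V) (c : Sym2 V → ℕ) : Prop :=
  ∀ ⦃a b b' : V⦄, G.Adj a b → G.Adj a b' → b ≠ b' → c s(a, b) ≠ c s(a, b')

/-- A set of edges is rainbow if its edges have pairwise distinct colours. -/
def IsRainbow {V : Type*} (c : Sym2 V → ℕ) (E : Set (Sym2 V)) : Prop :=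
  Set.InjOn c E

/-- A finite set of edges forms a matching: non-loops, pairwise vertex-disjoint. -/
def IsMatchingSet {V : Type*} (M : Finset (Sym2 V)) : Prop :=
  (∀ e ∈ M, ¬ e.IsDiag) ∧
  ∀ e ∈ M, ∀ f ∈ M, e ≠ f → ∀ v : V, v ∈ e → v ∉ f

/-- A class `U` of colours is `α`-rich in `G`: the edges of `G` with colour in `U`
contain a matching of size at least `α * |V|`. -/
def RichClass {V : Type*} [Fintype V] (G : SimpleGraph V) (c : Sym2 V → ℕ)
    (α : ℝ) (U : Set ℕ) : Prop :=
  ∃ M : Finset (Sym2 V), ↑M ⊆ G.edgeSet ∧ (∀ e ∈ M, c e ∈ U) ∧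
    IsMatchingSet M ∧ α * (Fintype.card V : ℝ) ≤ (M.card : ℝ)

/-- `G` is `α`-well-coloured: its colours can be partitioned into `|V| - 1`
pairwise disjoint `α`-rich classes. -/
def WellColoured {V : Type*} [Fintype V] (G : SimpleGraph V) (c : Sym2 V → ℕ)
    (α : ℝ) : Prop :=
  ∃ U : Fin (Fintype.card V - 1) → Set ℕ,
    (∀ i j, i ≠ j → Disjoint (U i) (U j)) ∧
    (∀ i, RichClass G c α (U i)) ∧
    (∀ e ∈ G.edgeSet, ∃ i, c e ∈ U i)

/-- A rainbow forest in `G`. -/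
def RainbowForest {V : Type*} (G : SimpleGraph V) (c : Sym2 V → ℕ)
    (F : SimpleGraph V) : Prop :=
  F ≤ G ∧ F.IsAcyclic ∧ IsRainbow c F.edgeSet

/-- `G` is `(α, t)`-robustly-coloured: after removing the edges of any `t`
rainbow forests, `G` remains `α`-well-coloured. -/
def RobustlyColoured {V : Type*} [Fintype V] (G : SimpleGraph V) (c : Sym2 V → ℕ)
    (α : ℝ) (t : ℕ) : Prop :=
  ∀ F : Fin t → SimpleGraph V, (∀ i, RainbowForest G c (F i)) →
    WellColoured (G.deleteEdges (⋃ i, (F i).edgeSet)) c α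

/-!
Put `k = n / 100 + 1`. The matchings are chosen one at a time, each greedily among the edges not
used before; since the `j < k` earlier matchings are rainbow matchings, they use at most `j` edges
at any vertex and at most `j` edges of any colour.

Greedy choice can be blocked by vertices of huge degree and by colours with huge classes, so the
budget is split once and for all as `r = |F| + |B| + ρ`, where `F` consists of vertices of degree
at least `n / 10`, `B` of colours with more than `τ = 3r + k` edges, and `F`, `B` contain all such
vertices and colours when `ρ > 0`. Each matching takes `ρ` edges of the thin part `S` (edges
avoiding `F` with colours outside `B`), then one edge of each colour in `B`, then one edge at each
vertex of `F`. The thin part has maximum degree at most `n / 10`, colour classes of size at most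
`τ` and, by the minimum degree condition, at least `(n - |F|) ρ / 2` edges, which leaves room for
the greedy choice; the colour classes of `B` are matchings of more than `τ` edges and the vertices
of `F` have at least `n / 10` neighbours, so the other edges are found greedily as well.
-/

section

open Finset Function

variable {V : Type*} {G : SimpleGraph V} {c : Sym2 V → ℕ}

noncomputable def coveredVerts (M : Finset (Sym2 V)) : Finset V := M.biUnion Sym2.toFinset

@[simp]
lemma mem_coveredVerts {M : Finset (Sym2 V)} {v : V} : v ∈ coveredVerts M ↔ ∃ e ∈ M, v ∈ e := by
  simp [coveredVerts, Sym2.mem_toFinset]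

lemma mem_coveredVerts_insert {M : Finset (Sym2 V)} {e : Sym2 V} {v : V} :
    v ∈ coveredVerts (insert e M) ↔ v ∈ e ∨ v ∈ coveredVerts M := by
  simp

lemma notMem_of_forall_notMem_coveredVerts {M : Finset (Sym2 V)} {e : Sym2 V}
    (h : ∀ v ∈ e, v ∉ coveredVerts M) : e ∉ M := fun he =>
  h _ (Sym2.out_fst_mem e) (mem_coveredVerts.mpr ⟨e, he, Sym2.out_fst_mem e⟩)

lemma card_insert_of_forall_notMem_coveredVerts {M : Finset (Sym2 V)} {e : Sym2 V}
    (hv : ∀ v ∈ e, v ∉ coveredVerts M) : #(insert e M) = #M + 1 :=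
  card_insert_of_notMem (notMem_of_forall_notMem_coveredVerts hv)

lemma Sym2.card_toFinset_le_two (e : Sym2 V) : #e.toFinset ≤ 2 := by
  rw [Sym2.card_toFinset]; split_ifs <;> omega

lemma card_coveredVerts_le (M : Finset (Sym2 V)) : #(coveredVerts M) ≤ 2 * #M := by
  rw [mul_comm]
  exact card_biUnion_le_card_mul _ _ _ fun e _ => e.card_toFinset_le_two

lemma sum_card_filter_mem_le [Fintype V] (S : Finset (Sym2 V)) :
    ∑ v, #{e ∈ S | v ∈ e} ≤ 2 * #S := by
  have := sum_card_bipartiteAbove_eq_sum_card_bipartiteBelow (s := univ) (t := S)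
    (r := fun (v : V) (e : Sym2 V) => v ∈ e)
  simp only [bipartiteAbove, bipartiteBelow] at this
  rw [this, mul_comm, ← smul_eq_mul]
  refine sum_le_card_nsmul _ _ _ fun e _ => le_trans (card_le_card fun v hv => ?_)
    e.card_toFinset_le_two
  simpa [Sym2.mem_toFinset] using hv

lemma card_filter_biUnion_le {ι α : Type*} [DecidableEq α] (s : Finset ι) (f : ι → Finset α)
    (p : α → Prop) [DecidablePred p] {b : ℕ} (h : ∀ i ∈ s, #{x ∈ f i | p x} ≤ b) :
    #{x ∈ s.biUnion f | p x} ≤ #s * b := by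
  rw [filter_biUnion]
  exact card_biUnion_le_card_mul _ _ _ h

lemma card_le_of_forall_avoiding_mem {S U W : Finset (Sym2 V)} {A : Finset V} {C : Finset ℕ}
    {D T : ℕ} (hD : ∀ v ∈ A, #{e ∈ S | v ∈ e} ≤ D) (hT : ∀ α ∈ C, #{e ∈ S | c e = α} ≤ T)
    (hW : ∀ e ∈ S, e ∉ U → (∀ v ∈ e, v ∉ A) → c e ∉ C → e ∈ W) :
    #S ≤ #(S ∩ U) + #A * D + #C * T + #W := by
  have hcover : S ⊆ (S ∩ U) ∪ A.biUnion (fun v => {e ∈ S | v ∈ e}) ∪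
      C.biUnion (fun α => {e ∈ S | c e = α}) ∪ W := by
    intro e he
    simp only [mem_union, mem_inter, mem_biUnion, mem_filter]
    by_cases heU : e ∈ U
    · exact Or.inl (Or.inl (Or.inl ⟨he, heU⟩))
    by_cases hA : ∃ v ∈ A, v ∈ e
    · obtain ⟨v, hv, hve⟩ := hA
      exact Or.inl (Or.inl (Or.inr ⟨v, hv, he, hve⟩))
    by_cases hC : c e ∈ C
    · exact Or.inl (Or.inr ⟨c e, hC, he, rfl⟩)
    exact Or.inr (hW e he heU (fun v hve hv => hA ⟨v, hv, hve⟩) hC)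
  have h₁ := card_le_card hcover
  have h₂ := card_biUnion_le_card_mul _ _ _ hD
  have h₃ := card_biUnion_le_card_mul _ _ _ hT
  have h₄ := card_union_le (S ∩ U) (A.biUnion fun v => {e ∈ S | v ∈ e})
  have h₅ := card_union_le (S ∩ U ∪ A.biUnion fun v => {e ∈ S | v ∈ e})
    (C.biUnion fun α => {e ∈ S | c e = α})
  have h₆ := card_union_le (S ∩ U ∪ (A.biUnion fun v => {e ∈ S | v ∈ e}) ∪
    C.biUnion fun α => {e ∈ S | c e = α}) W
  omega

lemma exists_mem_avoiding {S U : Finset (Sym2 V)} {A : Finset V} {C : Finset ℕ} {D T : ℕ}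
    (hD : ∀ v ∈ A, #{e ∈ S | v ∈ e} ≤ D) (hT : ∀ α ∈ C, #{e ∈ S | c e = α} ≤ T)
    (h : #(S ∩ U) + #A * D + #C * T < #S) :
    ∃ e ∈ S, e ∉ U ∧ (∀ v ∈ e, v ∉ A) ∧ c e ∉ C := by
  by_contra! hno
  have := card_le_of_forall_avoiding_mem (W := ∅) hD hT fun e he heU hA hC =>
    absurd (hno e he heU hA) hC
  simp only [card_empty, add_zero] at this
  omega

lemma card_le_one_of_mem_of_mem {S : Finset (Sym2 V)} {v w : V} (hvw : v ≠ w)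
    (h : ∀ e ∈ S, v ∈ e ∧ w ∈ e) : #S ≤ 1 :=
  Finset.card_le_one.mpr fun e he f hf =>
    ((Sym2.mem_and_mem_iff hvw).mp (h e he)).trans ((Sym2.mem_and_mem_iff hvw).mp (h f hf)).symm

lemma ProperColoring.eq_of_mem_of_mem {e f : Sym2 V} (hc : ProperColoring G c) (he : e ∈ G.edgeSet)
    (hf : f ∈ G.edgeSet) {v : V} (hve : v ∈ e) (hvf : v ∈ f) (hcol : c e = c f) : e = f := by
  obtain ⟨x, rfl⟩ := Sym2.mem_iff_exists.mp hve
  obtain ⟨y, rfl⟩ := Sym2.mem_iff_exists.mp hvf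
  by_contra hxy
  exact hc he hf (by rintro rfl; exact hxy rfl) hcol

lemma ProperColoring.card_le_one {S : Finset (Sym2 V)} (hc : ProperColoring G c)
    (hS : ↑S ⊆ G.edgeSet) {v : V} {α : ℕ} (hv : ∀ e ∈ S, v ∈ e) (hα : ∀ e ∈ S, c e = α) :
    #S ≤ 1 :=
  Finset.card_le_one.mpr fun e he f hf =>
    hc.eq_of_mem_of_mem (hS he) (hS hf) (hv e he) (hv f hf) ((hα e he).trans (hα f hf).symm)

lemma IsMatchingSet.card_filter_mem_le_one {M : Finset (Sym2 V)} (hM : IsMatchingSet M) (v : V) :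
    #{e ∈ M | v ∈ e} ≤ 1 := by
  refine card_le_one.mpr fun e he f hf => ?_
  rw [mem_filter] at he hf
  by_contra hef
  exact hM.2 e he.1 f hf.1 hef v he.2 hf.2

lemma IsRainbow.card_filter_color_le_one {M : Finset (Sym2 V)} (hM : IsRainbow c ↑M) (α : ℕ) :
    #{e ∈ M | c e = α} ≤ 1 := by
  refine card_le_one.mpr fun e he f hf => ?_
  rw [mem_filter] at he hf
  exact hM (mem_coe.mpr he.1) (mem_coe.mpr hf.1) (he.2.trans hf.2.symm)

def IsRainbowMatching (G : SimpleGraph V) (c : Sym2 V → ℕ) (M : Finset (Sym2 V)) : Prop :=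
  ↑M ⊆ G.edgeSet ∧ IsMatchingSet M ∧ IsRainbow c ↑M

lemma isRainbowMatching_empty : IsRainbowMatching G c ∅ :=
  ⟨by simp, ⟨by simp, by simp⟩, by simp [IsRainbow]⟩

lemma IsRainbowMatching.insert {M : Finset (Sym2 V)} {e : Sym2 V} (hM : IsRainbowMatching G c M)
    (he : e ∈ G.edgeSet) (hv : ∀ v ∈ e, v ∉ coveredVerts M) (hc : c e ∉ M.image c) :
    IsRainbowMatching G c (insert e M) := by
  obtain ⟨hMG, ⟨hdiag, hdisj⟩, hrain⟩ := hM
  refine ⟨?_, ⟨?_, ?_⟩, ?_⟩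
  · rw [coe_insert]; exact Set.insert_subset he hMG
  · intro f hf
    rcases mem_insert.mp hf with rfl | hf
    exacts [G.not_isDiag_of_mem_edgeSet he, hdiag f hf]
  · simp only [mem_insert]
    rintro f (rfl | hf) g (rfl | hg) hfg v hvf hvg
    · exact hfg rfl
    · exact hv v hvf (mem_coveredVerts.mpr ⟨g, hg, hvg⟩)
    · exact hv v hvg (mem_coveredVerts.mpr ⟨f, hf, hvf⟩)
    · exact hdisj f hf g hg hfg v hvf hvg
  · have heM : e ∉ (M : Set (Sym2 V)) := by exact_mod_cast notMem_of_forall_notMem_coveredVerts hv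
    rw [IsRainbow, coe_insert, Set.injOn_insert heM]
    exact ⟨hrain, fun ⟨f, hf, hcf⟩ => hc (mem_image.mpr ⟨f, hf, hcf⟩)⟩

theorem exists_isRainbowMatching_subset {S U : Finset (Sym2 V)} (hS : ↑S ⊆ G.edgeSet) {D T : ℕ}
    (hD : ∀ v, #{e ∈ S | v ∈ e} ≤ D) (hT : ∀ α, #{e ∈ S | c e = α} ≤ T) :
    ∀ N, (2 * D + T + 1) * N + #(S ∩ U) ≤ #S →
      ∃ M ⊆ S, #M = N ∧ IsRainbowMatching G c M ∧ Disjoint M U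
  | 0, _ => ⟨∅, empty_subset _, rfl, isRainbowMatching_empty, disjoint_empty_left _⟩
  | N + 1, h => by
    obtain ⟨M, hMS, rfl, hM, hMU⟩ := exists_isRainbowMatching_subset hS hD hT N (by nlinarith)
    have hA := card_coveredVerts_le M
    have hC : #(M.image c) ≤ #M := card_image_le
    obtain ⟨e, heS, heU, hev, hec⟩ := exists_mem_avoiding (U := U) (fun v _ => hD v)
      (fun α _ => hT α) (by nlinarith)
    refine ⟨insert e M, insert_subset heS hMS, card_insert_of_forall_notMem_coveredVerts hev,
      hM.insert (hS heS) hev hec, disjoint_insert_left.mpr ⟨heU, hMU⟩⟩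

section Extension

variable [Fintype V] (hc : ProperColoring G c) {U : Finset (Sym2 V)} {j : ℕ}
include hc

theorem ProperColoring.exists_extension_of_colors (hU : ∀ α, #{e ∈ U | c e = α} ≤ j)
    (R : Finset V) (B : Finset ℕ) (M : Finset (Sym2 V)) (hM : IsRainbowMatching G c M)
    (hMU : Disjoint M U) (hRM : Disjoint R (coveredVerts M)) (hBM : Disjoint B (M.image c))
    (hB : ∀ α ∈ B, j + 2 * (#M + #B) + #R ≤ #{e ∈ G.edgeFinset | c e = α}) :
    ∃ N, #N = #M + #B ∧ IsRainbowMatching G c N ∧ Disjoint N U ∧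
      Disjoint R (coveredVerts N) ∧ ∀ e ∈ N, e ∈ M ∨ c e ∈ B := by
  induction B using Finset.induction_on generalizing M with
  | empty => exact ⟨M, rfl, hM, hMU, hRM, fun e he => Or.inl he⟩
  | @insert α B hαB ih =>
    set S : Finset (Sym2 V) := {e ∈ G.edgeFinset | c e = α}
    have hSG : ↑S ⊆ G.edgeSet := fun e he => (by simpa [S] using he : _ ∧ _).1
    have hSU : #(S ∩ U) ≤ j := (card_le_card fun e he => by simp_all [S]).trans (hU α)
    have hSv (v : V) : #{e ∈ S | v ∈ e} ≤ 1 :=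
      hc.card_le_one (fun e he => hSG (mem_filter.mp he).1) (fun e he => (mem_filter.mp he).2)
        (fun e he => (mem_filter.mp (mem_filter.mp he).1).2)
    obtain ⟨e, heS, heU, hev, -⟩ := exists_mem_avoiding (c := c) (S := S) (U := U)
      (A := coveredVerts M ∪ R) (C := ∅) (T := 0) (fun v _ => hSv v) (by simp) (by
        have := card_union_le (coveredVerts M) R
        have := card_coveredVerts_le M
        have : j + 2 * (#M + (#B + 1)) + #R ≤ #S := by
          simpa [card_insert_of_notMem hαB] using hB α (mem_insert_self α B)
        omega)
    have hαe : c e = α := (mem_filter.mp heS).2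
    have hev' : ∀ v ∈ e, v ∉ coveredVerts M := fun v hv h => hev v hv (mem_union_left _ h)
    have hcM : c e ∉ M.image c := hαe ▸ disjoint_left.mp hBM (mem_insert_self α B)
    obtain ⟨N, hN, hNM, hNU, hRN, hNe⟩ := ih (insert e M) (hM.insert (hSG heS) hev' hcM)
      (disjoint_insert_left.mpr ⟨heU, hMU⟩)
      (by
        refine disjoint_left.mpr fun v hvR hv => ?_
        rcases mem_coveredVerts_insert.mp hv with hve | hvM
        exacts [hev v hve (mem_union_right _ hvR), disjoint_left.mp hRM hvR hvM])
      (by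
        rw [image_insert, hαe, disjoint_insert_right]
        exact ⟨hαB, (disjoint_insert_left.mp hBM).2⟩)
      (fun β hβ => by
        simpa [card_insert_of_notMem hαB, card_insert_of_forall_notMem_coveredVerts hev',
          add_assoc, add_comm 1] using hB β (mem_insert_of_mem hβ))
    refine ⟨N, ?_, hNM, hNU, hRN, fun f hf => ?_⟩
    · rw [hN, card_insert_of_forall_notMem_coveredVerts hev', card_insert_of_notMem hαB]; ring
    · rcases hNe f hf with hfM | hfB
      · rcases mem_insert.mp hfM with rfl | hfM
        exacts [Or.inr (hαe ▸ mem_insert_self _ _), Or.inl hfM]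
      · exact Or.inr (mem_insert_of_mem hfB)

theorem ProperColoring.exists_extension_at_vertices (hU : ∀ v, #{e ∈ U | v ∈ e} ≤ j)
    (F : Finset V) (M : Finset (Sym2 V)) (hM : IsRainbowMatching G c M) (hMU : Disjoint M U)
    (hFM : Disjoint F (coveredVerts M)) (hF : ∀ v ∈ F, j + 3 * (#M + #F) ≤ G.degree v) :
    ∃ N, #N = #M + #F ∧ IsRainbowMatching G c N ∧ Disjoint N U ∧
      ∀ e ∈ N, e ∈ M ∨ ∃ v ∈ F, v ∈ e := by
  induction F using Finset.induction_on generalizing M with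
  | empty => exact ⟨M, rfl, hM, hMU, fun e he => Or.inl he⟩
  | @insert v F hvF ih =>
    set S := G.incidenceFinset v
    have hSG : ↑S ⊆ G.edgeSet := fun e he => ((G.mem_incidenceFinset v e).mp he).1
    have hSv : ∀ e ∈ S, v ∈ e := fun e he => ((G.mem_incidenceFinset v e).mp he).2
    have hvM : v ∉ coveredVerts M := disjoint_left.mp hFM (mem_insert_self v F)
    have hSU : #(S ∩ U) ≤ j := (card_le_card fun e he => by
      simpa [(mem_inter.mp he).2] using hSv e (mem_inter.mp he).1).trans (hU v)
    obtain ⟨e, heS, heU, hev, hec⟩ := exists_mem_avoiding (S := S) (U := U)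
      (A := coveredVerts M ∪ F) (C := M.image c) (D := 1) (T := 1)
      (fun w hw => card_le_one_of_mem_of_mem (v := v) (w := w)
        (by rintro rfl; exact (mem_union.mp hw).elim hvM hvF)
        (fun e he => ⟨hSv e (mem_filter.mp he).1, (mem_filter.mp he).2⟩))
      (fun α _ => hc.card_le_one (fun e he => hSG (mem_filter.mp he).1)
        (fun e he => hSv e (mem_filter.mp he).1) (fun e he => (mem_filter.mp he).2))
      (by
        have := card_union_le (coveredVerts M) F
        have := card_coveredVerts_le M
        have : #(M.image c) ≤ #M := card_image_le
        have : j + 3 * (#M + (#F + 1)) ≤ #S := by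
          simpa [S, card_insert_of_notMem hvF] using hF v (mem_insert_self v F)
        omega)
    have hev' : ∀ u ∈ e, u ∉ coveredVerts M := fun u hu h => hev u hu (mem_union_left _ h)
    obtain ⟨N, hN, hNM, hNU, hNe⟩ := ih (insert e M) (hM.insert (hSG heS) hev' hec)
      (disjoint_insert_left.mpr ⟨heU, hMU⟩)
      (by
        refine disjoint_left.mpr fun u huF hu => ?_
        rcases mem_coveredVerts_insert.mp hu with hue | huM
        exacts [hev u hue (mem_union_right _ huF),
          disjoint_left.mp hFM (mem_insert_of_mem huF) huM])
      (fun w hw => by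
        simpa [card_insert_of_notMem hvF, card_insert_of_forall_notMem_coveredVerts hev',
          add_assoc, add_comm 1] using hF w (mem_insert_of_mem hw))
    refine ⟨N, ?_, hNM, hNU, fun f hf => ?_⟩
    · rw [hN, card_insert_of_forall_notMem_coveredVerts hev', card_insert_of_notMem hvF]; ring
    · rcases hNe f hf with hfM | ⟨w, hwF, hwf⟩
      · rcases mem_insert.mp hfM with rfl | hfM
        exacts [Or.inr ⟨v, mem_insert_self v F, hSv f heS⟩, Or.inl hfM]
      · exact Or.inr ⟨w, mem_insert_of_mem hwF, hwf⟩

end Extension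

theorem exists_pairwise_disjoint_of_forall_exists {β : Type*} [PartialOrder β] [OrderBot β]
    (P : β → Prop) (k : ℕ)
    (h : ∀ j < k, ∀ M : Fin j → β, (∀ i, P (M i)) → ∃ N, P N ∧ ∀ i, Disjoint (M i) N) :
    ∃ M : Fin k → β, (∀ i, P (M i)) ∧ Pairwise (Disjoint on M) := by
  induction k with
  | zero => exact ⟨Fin.elim0, fun i => i.elim0, fun i => i.elim0⟩
  | succ k ih =>
    obtain ⟨M, hM, hMdisj⟩ := ih fun j hj => h j (Nat.lt_succ_of_lt hj)
    obtain ⟨N, hN, hMN⟩ := h k (Nat.lt_succ_self k) M hM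
    refine ⟨Fin.snoc M N, Fin.lastCases (by simpa using hN) (by simpa using hM), ?_⟩
    intro i i' hii'
    induction i using Fin.lastCases <;> induction i' using Fin.lastCases
    · exact absurd rfl hii'
    · simpa [onFun] using (hMN _).symm
    · simpa [onFun] using hMN _
    · simpa [onFun] using hMdisj (fun h => hii' (congrArg _ h))

theorem ProperColoring.card_sub_mul_le_card_avoiding [Fintype V] (hc : ProperColoring G c) {r : ℕ}
    (hdeg : ∀ v, r ≤ G.degree v) (F : Finset V) (B : Finset ℕ) :
    (Fintype.card V - #F) * (r - #F - #B) ≤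
      2 * #{e ∈ G.edgeFinset | (∀ v ∈ e, v ∉ F) ∧ c e ∉ B} := by
  set S : Finset (Sym2 V) := {e ∈ G.edgeFinset | (∀ v ∈ e, v ∉ F) ∧ c e ∉ B}
  have hdegS : ∀ v ∉ F, r - #F - #B ≤ #{e ∈ S | v ∈ e} := fun v hvF => by
    have hSv : ∀ e ∈ G.incidenceFinset v, e ∈ G.edgeSet ∧ v ∈ e := fun e he =>
      (G.mem_incidenceFinset v e).mp he
    have := card_le_of_forall_avoiding_mem (c := c) (S := G.incidenceFinset v) (U := ∅) (A := F)
      (C := B) (W := {e ∈ S | v ∈ e}) (D := 1) (T := 1)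
      (fun w hw => card_le_one_of_mem_of_mem (v := v) (w := w) (by rintro rfl; exact hvF hw)
        (fun e he => ⟨(hSv e (mem_filter.mp he).1).2, (mem_filter.mp he).2⟩))
      (fun α _ => hc.card_le_one (fun e he => (hSv e (mem_filter.mp he).1).1)
        (fun e he => (hSv e (mem_filter.mp he).1).2) (fun e he => (mem_filter.mp he).2))
      (fun e he _ hF hB => mem_filter.mpr
        ⟨mem_filter.mpr ⟨G.mem_edgeFinset.mpr (hSv e he).1, hF, hB⟩, (hSv e he).2⟩)
    rw [G.card_incidenceFinset_eq_degree, inter_empty, card_empty] at this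
    have := hdeg v
    omega
  calc (Fintype.card V - #F) * (r - #F - #B) = #Fᶜ * (r - #F - #B) := by rw [card_compl]
    _ ≤ ∑ v ∈ Fᶜ, #{e ∈ S | v ∈ e} := by
      rw [← smul_eq_mul]
      exact card_nsmul_le_sum _ _ _ fun v hv => hdegS v (mem_compl.mp hv)
    _ ≤ ∑ v, #{e ∈ S | v ∈ e} := sum_le_sum_of_subset (subset_univ _)
    _ ≤ 2 * #S := sum_card_filter_mem_le S

structure Reservation [Fintype V] (G : SimpleGraph V) (c : Sym2 V → ℕ) (r τ : ℕ) where
  F : Finset V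
  B : Finset ℕ
  S : Finset (Sym2 V)
  ρ : ℕ
  card_add_card_add : #F + #B + ρ = r
  le_degree : ∀ v ∈ F, Fintype.card V ≤ 10 * G.degree v
  lt_card_colorClass : ∀ α ∈ B, τ < #{e ∈ G.edgeFinset | c e = α}
  subset_edgeSet : ↑S ⊆ G.edgeSet
  avoids : ∀ e ∈ S, (∀ v ∈ e, v ∉ F) ∧ c e ∉ B
  card_filter_mem_le : ∀ v, #{e ∈ S | v ∈ e} ≤ Fintype.card V / 10
  card_filter_color_le : ∀ α, #{e ∈ S | c e = α} ≤ τ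
  card_sub_mul_le : (Fintype.card V - #F) * ρ ≤ 2 * #S

theorem ProperColoring.nonempty_reservation [Fintype V] (hc : ProperColoring G c) {r : ℕ}
    (hdeg : ∀ v, r ≤ G.degree v) (τ : ℕ) : Nonempty (Reservation G c r τ) := by
  set n := Fintype.card V
  set heavy : Finset V := {v | n ≤ 10 * G.degree v}
  set large : Finset ℕ := {α ∈ G.edgeFinset.image c | τ < #{e ∈ G.edgeFinset | c e = α}}
  have hheavy : ∀ v ∈ heavy, n ≤ 10 * G.degree v := fun v hv => (mem_filter.mp hv).2
  have hlarge : ∀ α ∈ large, τ < #{e ∈ G.edgeFinset | c e = α} := fun α hα =>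
    (mem_filter.mp hα).2
  by_cases hfull : r ≤ #heavy + #large
  · obtain ⟨F, hF, hFcard⟩ := exists_subset_card_eq (min_le_right r #heavy)
    obtain ⟨B, hB, hBcard⟩ := exists_subset_card_eq (s := large) (n := r - #F) (by omega)
    exact ⟨⟨F, B, ∅, 0, by omega, fun v hv => hheavy v (hF hv), fun α hα => hlarge α (hB hα),
      by simp, by simp, by simp, by simp, by simp⟩⟩
  set S : Finset (Sym2 V) := {e ∈ G.edgeFinset | (∀ v ∈ e, v ∉ heavy) ∧ c e ∉ large}
  refine ⟨⟨heavy, large, S, r - #heavy - #large, by omega, hheavy, hlarge,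
    fun e he => by simpa using (mem_filter.mp he).1, fun e he => (mem_filter.mp he).2,
    fun v => ?_, fun α => ?_, hc.card_sub_mul_le_card_avoiding hdeg heavy large⟩⟩
  · by_cases hv : v ∈ heavy
    · refine (card_eq_zero.mpr (filter_eq_empty_iff.mpr fun e he hve => ?_)).trans_le
        (Nat.zero_le _)
      exact (mem_filter.mp he).2.1 v hve hv
    have hle : #{e ∈ S | v ∈ e} ≤ G.degree v := by
      rw [← G.card_incidenceFinset_eq_degree]
      refine card_le_card fun e he => ?_
      simp only [S, mem_filter, SimpleGraph.mem_edgeFinset] at he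
      exact (G.mem_incidenceFinset v e).mpr ⟨he.1.1, he.2⟩
    have : ¬ n ≤ 10 * G.degree v := fun h => hv (mem_filter.mpr ⟨mem_univ v, h⟩)
    omega
  · by_cases hα : α ∈ large
    · refine (card_eq_zero.mpr (filter_eq_empty_iff.mpr fun e he hcα => ?_)).trans_le
        (Nat.zero_le _)
      exact (mem_filter.mp he).2.2 (hcα ▸ hα)
    refine (card_le_card (filter_subset_filter _ (filter_subset _ _))).trans
      (not_lt.mp fun hlt => ?_)
    obtain ⟨e, he⟩ := card_pos.mp (pos_of_gt hlt)
    have hαc : α ∈ G.edgeFinset.image c :=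
      mem_image.mpr ⟨e, (mem_filter.mp he).1, (mem_filter.mp he).2⟩
    exact hα (mem_filter.mpr ⟨hαc, hlt⟩)

namespace Reservation

variable [Fintype V] {r τ : ℕ} (R : Reservation G c r τ)

-- The bound on `M ∩ S` keeps the earlier matchings from using up the thin part.
def Admissible (M : Finset (Sym2 V)) : Prop :=
  IsRainbowMatching G c M ∧ #M = r ∧ #(M ∩ R.S) ≤ R.ρ

theorem exists_admissible_disjoint (hc : ProperColoring G c) (hr : 100 * r ≤ Fintype.card V)
    (hτ : τ = 3 * r + Fintype.card V / 100 + 1) {U : Finset (Sym2 V)} {j : ℕ}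
    (hj : 100 * j ≤ Fintype.card V) (hUv : ∀ v, #{e ∈ U | v ∈ e} ≤ j)
    (hUc : ∀ α, #{e ∈ U | c e = α} ≤ j) (hUS : #(R.S ∩ U) ≤ j * R.ρ) :
    ∃ M, R.Admissible M ∧ Disjoint M U := by
  have hsum := R.card_add_card_add
  obtain ⟨M₁, hM₁S, hM₁card, hM₁, hM₁U⟩ := exists_isRainbowMatching_subset (U := U)
    R.subset_edgeSet R.card_filter_mem_le R.card_filter_color_le R.ρ (by
      rcases Nat.eq_zero_or_pos R.ρ with hρ | hρ
      · simpa [hρ] using card_le_card (inter_subset_left (s₁ := R.S) (s₂ := U))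
      have h2S := R.card_sub_mul_le
      have : 2 * (2 * (Fintype.card V / 10) + τ + 1 + j) ≤ Fintype.card V - #R.F := by omega
      nlinarith)
  have hM₁avoid : ∀ e ∈ M₁, (∀ v ∈ e, v ∉ R.F) ∧ c e ∉ R.B := fun e he => R.avoids e (hM₁S he)
  obtain ⟨M₂, hM₂card, hM₂, hM₂U, hFM₂, hM₂e⟩ := hc.exists_extension_of_colors hUc R.F R.B M₁ hM₁
    hM₁U
    (disjoint_left.mpr fun v hvF hv => by
      obtain ⟨e, he, hve⟩ := mem_coveredVerts.mp hv
      exact (hM₁avoid e he).1 v hve hvF)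
    (disjoint_left.mpr fun α hαB hα => by
      obtain ⟨e, he, rfl⟩ := mem_image.mp hα
      exact (hM₁avoid e he).2 hαB)
    (fun α hα => by have := R.lt_card_colorClass α hα; omega)
  obtain ⟨M₃, hM₃card, hM₃, hM₃U, hM₃e⟩ := hc.exists_extension_at_vertices hUv R.F M₂ hM₂ hM₂U
    hFM₂ (fun v hv => by have := R.le_degree v hv; omega)
  refine ⟨M₃, ⟨hM₃, by omega, ?_⟩, hM₃U⟩
  refine (card_le_card fun e he => ?_).trans hM₁card.le
  obtain ⟨heM₃, heS⟩ := mem_inter.mp he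
  have ⟨hF, hB⟩ := R.avoids e heS
  rcases hM₃e e heM₃ with heM₂ | ⟨v, hv, hve⟩
  · exact (hM₂e e heM₂).resolve_right hB
  · exact absurd hv (hF v hve)

theorem exists_pairwise_disjoint_admissible (hc : ProperColoring G c)
    (hr : 100 * r ≤ Fintype.card V) (hτ : τ = 3 * r + Fintype.card V / 100 + 1) :
    ∃ M : Fin (Fintype.card V / 100 + 1) → Finset (Sym2 V),
      (∀ i, R.Admissible (M i)) ∧ Pairwise (Disjoint on M) := by
  refine exists_pairwise_disjoint_of_forall_exists _ _ fun j hj Ms hMs => ?_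
  have hU (p : Sym2 V → Prop) [DecidablePred p] {b : ℕ} (h : ∀ i, #{e ∈ Ms i | p e} ≤ b) :
      #{e ∈ univ.biUnion Ms | p e} ≤ j * b := by
    simpa using card_filter_biUnion_le univ Ms p fun i _ => h i
  obtain ⟨M, hM, hMU⟩ := R.exists_admissible_disjoint hc hr hτ (U := univ.biUnion Ms) (j := j)
    (by omega)
    (fun v => by simpa using hU (v ∈ ·) fun i => (hMs i).1.2.1.card_filter_mem_le_one v)
    (fun α => by simpa using hU (c · = α) fun i => (hMs i).1.2.2.card_filter_color_le_one α)
    (by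
      rw [inter_comm, ← filter_mem_eq_inter]
      exact hU (· ∈ R.S) fun i => by rw [filter_mem_eq_inter]; exact (hMs i).2.2)
  exact ⟨M, hM, fun i => ((disjoint_biUnion_right _ _ _).mp hMU i (mem_univ i)).symm⟩

end Reservation

end

theorem stmt9_general {V : Type*} [Fintype V] (G : SimpleGraph V)
    (c : Sym2 V → ℕ) (r : ℕ)
    (hr : (r : ℝ) ≤ (Fintype.card V : ℝ) / 100)
    (hproper : ProperColoring G c)
    (hdeg : ∀ v : V, r ≤ G.degree v) :
    ∃ (k : ℕ) (M : Fin k → Finset (Sym2 V)),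
      (Fintype.card V : ℝ) / 100 ≤ (k : ℝ) ∧
      (∀ i, ↑(M i) ⊆ G.edgeSet ∧ IsMatchingSet (M i) ∧
        Set.InjOn c ↑(M i) ∧ (M i).card = r) ∧
      (∀ i j, i ≠ j → Disjoint (M i) (M j)) := by
  set n := Fintype.card V
  have hrn : 100 * r ≤ n := by
    have : ((100 * r : ℕ) : ℝ) ≤ n := by push_cast; linarith
    exact_mod_cast this
  obtain ⟨R⟩ := hproper.nonempty_reservation hdeg (3 * r + n / 100 + 1)
  obtain ⟨M, hM, hdisj⟩ := R.exists_pairwise_disjoint_admissible hproper hrn rfl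
  refine ⟨n / 100 + 1, M, ?_, fun i => ?_, fun i j hij => hdisj hij⟩
  · have : (n : ℝ) < ((100 * (n / 100 + 1) : ℕ) : ℝ) := by
      exact_mod_cast Nat.lt_mul_div_succ n (by norm_num)
    rw [div_le_iff₀ (by norm_num)]
    push_cast at this ⊢
    linarith
  · obtain ⟨⟨hG, hmatch, hrain⟩, hcard, -⟩ := hM i
    exact ⟨hG, hmatch, hrain, hcard⟩

theorem stmt9 {V : Type*} [Fintype V] [DecidableEq V] (G : SimpleGraph V)
    (c : Sym2 V → ℕ) (r : ℕ)
    (hr : (r : ℝ) ≤ (Fintype.card V : ℝ) / 100)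
    (hproper : ProperColoring G c)
    (hdeg : ∀ v : V, r ≤ G.degree v) :
    ∃ (k : ℕ) (M : Fin k → Finset (Sym2 V)),
      (Fintype.card V : ℝ) / 100 ≤ (k : ℝ) ∧
      (∀ i, ↑(M i) ⊆ G.edgeSet ∧ IsMatchingSet (M i) ∧
        Set.InjOn c ↑(M i) ∧ (M i).card = r) ∧
      (∀ i j, i ≠ j → Disjoint (M i) (M j)) :=
  stmt9_general G c r hr hproper hdeg
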